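/- arXiv:2312.03529 — 3 statements merged into one kernel-verified Lean document; each statement's English description precedes it below -/
import Mathlib

section
/- Let X be a submetrizable space and F ⊆ X. Then F is relatively pseudocompact if and only if for every coarser metrizable topology σ on X, the closure of F in (X, σ) is compact in (X, σ). -/
universe u

def RelPseudocompact {X : Type u} [TopologicalSpace X] (F : Set X) : Prop :=
  ∀ g : X → ℝ, Continuous g → ∃ M : ℝ, ∀ x ∈ F, |g x| ≤ M

def Submetrizable (X : Type u) [t : TopologicalSpace X] : Prop :=
  ∃ σ : TopologicalSpace X, t ≤ σ ∧ @TopologicalSpace.MetrizableSpace X σ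

/-!
In a metrizable space a relatively pseudocompact set has compact closure: otherwise there is a
sequence in `F` without cluster points, its range is an infinite closed discrete set, and the
Tietze extension of an unbounded function on that range is unbounded on `F`. Relative
pseudocompactness passes to coarser topologies. Conversely, a continuous `g` stays continuous
for the coarser metrizable topology pulled back along `x ↦ (x, g x)` into `(X, σ₀) × ℝ`, where
`σ₀` is any coarser metrizable topology, so it is bounded on the compact closure of `F` there.
-/

open Set Filter Topology

section LocallyFiniteSingletons

variable {X : Type*} [TopologicalSpace X]

lemma locallyFinite_singleton_of_forall_not_mapClusterPt {x : ℕ → X}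
    (hx : ∀ a, ¬MapClusterPt a atTop x) : LocallyFinite fun n ↦ ({x n} : Set X) := by
  intro a
  obtain ⟨U, hU, hxU⟩ : ∃ U ∈ 𝓝 a, ∀ᶠ n in atTop, x n ∉ U := by
    simpa [mapClusterPt_iff_frequently] using hx a
  refine ⟨U, hU, ?_⟩
  rw [← Nat.cofinite_eq_atTop, eventually_cofinite] at hxU
  simpa using hxU

variable {ι : Type*} {x : ι → X}

lemma LocallyFinite.isClosed_of_subset_range [T1Space X]
    (hx : LocallyFinite fun i ↦ ({x i} : Set X)) {s : Set X} (hs : s ⊆ range x) : IsClosed s := by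
  have hsx : s = ⋃ i, s ∩ {x i} := by
    rw [← inter_iUnion, ← range_eq_iUnion, inter_eq_left.mpr hs]
  rw [hsx]
  exact (hx.subset fun i ↦ inter_subset_right).isClosed_iUnion fun i ↦
    (Set.subsingleton_singleton.anti inter_subset_right).isClosed

lemma LocallyFinite.isDiscrete_range [T1Space X] (hx : LocallyFinite fun i ↦ ({x i} : Set X)) :
    IsDiscrete (range x) :=
  isDiscrete_iff_forall_mem_exists_isClosed.mpr fun s hs ↦
    ⟨s, hx.isClosed_of_subset_range hs, inter_eq_left.mpr hs⟩

lemma LocallyFinite.infinite_range [Infinite ι] (hx : LocallyFinite fun i ↦ ({x i} : Set X)) :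
    (range x).Infinite := fun hfin ↦
  infinite_univ (α := ι) <| by
    simpa using hx.finite_nonempty_inter_compact hfin.isCompact

end LocallyFiniteSingletons

lemma IsClosed.exists_continuous_not_bddAbove_image {X : Type*} [TopologicalSpace X]
    [NormalSpace X] {S : Set X} (hS : IsClosed S) (hd : IsDiscrete S) (hinf : S.Infinite) :
    ∃ g : X → ℝ, Continuous g ∧ ¬BddAbove (g '' S) := by
  have := hd.to_subtype
  have := hinf.to_subtype
  let e := Infinite.natEmbedding S
  obtain ⟨G, hG⟩ := ContinuousMap.exists_restrict_eq hS
    ⟨fun s ↦ ((Function.invFun (e : ℕ → S) s : ℕ) : ℝ), continuous_of_discreteTopology⟩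
  refine ⟨G, G.continuous, fun ⟨M, hM⟩ ↦ ?_⟩
  obtain ⟨n, hn⟩ := exists_nat_gt M
  have hGe : G (e n) = n := by
    simpa [Function.leftInverse_invFun e.injective n] using ContinuousMap.congr_fun hG (e n)
  exact (hM ⟨e n, (e n).2, hGe⟩).not_gt hn

lemma Metric.exists_seq_forall_not_mapClusterPt_of_not_isCompact_closure {X : Type*}
    [PseudoMetricSpace X] {F : Set X} (hF : ¬IsCompact (closure F)) :
    ∃ x : ℕ → X, (∀ n, x n ∈ F) ∧ ∀ a, ¬MapClusterPt a atTop x := by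
  obtain ⟨y, hyF, hy⟩ : ∃ y : ℕ → X, (∀ n, y n ∈ closure F) ∧
      ∀ a ∈ closure F, ∀ φ : ℕ → ℕ, StrictMono φ → ¬Tendsto (y ∘ φ) atTop (𝓝 a) := by
    simpa [isCompact_iff_isSeqCompact, IsSeqCompact] using hF
  choose x hxF hxy using fun n ↦
    Metric.mem_closure_iff.mp (hyF n) (1 / (n + 1)) Nat.one_div_pos_of_nat
  have hdist : Tendsto (fun n ↦ dist (x n) (y n)) atTop (𝓝 0) :=
    squeeze_zero (fun _ ↦ dist_nonneg) (fun n ↦ (dist_comm (x n) (y n)).trans_le (hxy n).le)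
      tendsto_one_div_add_atTop_nhds_zero_nat
  refine ⟨x, hxF, fun a ha ↦ ?_⟩
  obtain ⟨φ, hφ, hxa⟩ := ha.tendsto_subseq
  exact hy a (mem_closure_of_tendsto hxa (.of_forall fun k ↦ hxF (φ k))) φ hφ
    (hxa.congr_dist (hdist.comp hφ.tendsto_atTop))

lemma RelPseudocompact.of_le {X : Type u} {t σ : TopologicalSpace X} (hle : t ≤ σ) {F : Set X}
    (hF : @RelPseudocompact X t F) : @RelPseudocompact X σ F :=
  fun g hg ↦ hF g (continuous_le_dom hle hg)

lemma RelPseudocompact.isCompact_closure {X : Type u} [TopologicalSpace X]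
    [TopologicalSpace.MetrizableSpace X] {F : Set X} (hF : RelPseudocompact F) :
    IsCompact (closure F) := by
  let := TopologicalSpace.metrizableSpaceMetric X
  by_contra hcpt
  obtain ⟨x, hxF, hx⟩ := Metric.exists_seq_forall_not_mapClusterPt_of_not_isCompact_closure hcpt
  have hlf := locallyFinite_singleton_of_forall_not_mapClusterPt hx
  obtain ⟨g, hg, hunb⟩ :=
    hlf.isClosed_of_subset_range subset_rfl |>.exists_continuous_not_bddAbove_image
      hlf.isDiscrete_range hlf.infinite_range
  obtain ⟨M, hM⟩ := hF g hg
  exact hunb ⟨M, by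
    rintro _ ⟨_, ⟨n, rfl⟩, rfl⟩
    exact (le_abs_self _).trans (hM _ (hxF n))⟩

lemma TopologicalSpace.MetrizableSpace.induced {X Y : Type*} [TopologicalSpace Y]
    [MetrizableSpace Y] {f : X → Y} (hf : Function.Injective f) :
    @MetrizableSpace X (.induced f inferInstance) :=
  let := TopologicalSpace.induced f inferInstance
  IsEmbedding.metrizableSpace ⟨.induced f, hf⟩

lemma Submetrizable.exists_le_metrizable_continuous {X : Type u} [t : TopologicalSpace X]
    (hX : Submetrizable X) {Y : Type*} [TopologicalSpace Y] [TopologicalSpace.MetrizableSpace Y]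
    {g : X → Y} (hg : Continuous g) :
    ∃ σ : TopologicalSpace X, t ≤ σ ∧ @TopologicalSpace.MetrizableSpace X σ ∧
      Continuous[σ, _] g := by
  obtain ⟨σ₀, hle, hσ₀⟩ := hX
  let τ : TopologicalSpace (X × Y) := @instTopologicalSpaceProd X Y σ₀ _
  let f : X → X × Y := fun x ↦ (x, g x)
  have hf : Continuous[t, τ] f :=
    @Continuous.prodMk X Y X σ₀ _ t id g (continuous_id_of_le hle) hg
  exact ⟨.induced f τ, continuous_iff_le_induced.mp hf,
    @TopologicalSpace.MetrizableSpace.induced X (X × Y) τ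
      (@TopologicalSpace.metrizableSpace_prod X Y σ₀ _ hσ₀ _) f fun _ _ h ↦ congrArg Prod.fst h,
    @Continuous.comp X (X × Y) Y (.induced f τ) τ _ _ _ continuous_snd continuous_induced_dom⟩

/-- In a submetrizable space, `F` is relatively pseudocompact iff its closure in every coarser
metrizable topology is compact in that topology. -/
theorem relPseudocompact_iff_closure_compact {X : Type u} [t : TopologicalSpace X]
    (hX : Submetrizable X) (F : Set X) :
    RelPseudocompact F ↔
      ∀ σ : TopologicalSpace X, t ≤ σ → @TopologicalSpace.MetrizableSpace X σ →
        @IsCompact X σ (@closure X σ F) := by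
  refine ⟨fun hF σ hle hσ ↦ (hF.of_le hle).isCompact_closure, fun h g hg ↦ ?_⟩
  obtain ⟨σ, hle, hσ, hgσ⟩ := hX.exists_le_metrizable_continuous hg
  let := σ
  obtain ⟨M, hM⟩ := (h σ hle hσ).exists_bound_of_continuousOn hgσ.continuousOn
  exact ⟨M, fun x hx ↦ hM x (subset_closure hx)⟩
end

section
/- Let f : X → Y be a closed continuous surjection where X is submetrizable, Y is functionally Hausdorff, and y ∈ Y is a q-point. Then for every coarser metrizable topology τ on X, the boundary of f⁻¹(y) in the topology σ(τ,f) (generated by τ and preimages of open sets of Y) is a compact subset of (X, σ(τ,f)). -/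
universe u v

def FunctionallyHausdorff (Y : Type v) [TopologicalSpace Y] : Prop :=
  ∀ a b : Y, a ≠ b → ∃ g : Y → ℝ, Continuous g ∧ (∀ z, g z ∈ Set.Icc (0:ℝ) 1) ∧
    g a = 0 ∧ g b = 1

def IsQPoint {Y : Type v} [TopologicalSpace Y] (y : Y) : Prop :=
  ∃ U : ℕ → Set Y, (∀ i, IsOpen (U i) ∧ y ∈ U i) ∧
    ∀ x : ℕ → Y, (∀ i, x i ∈ U i) → Function.Injective x →
      ∃ p : Y, p ∈ closure (Set.range x \ {p})

def sigmaTop {X : Type u} {Y : Type v} (τ : TopologicalSpace X) (tY : TopologicalSpace Y)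
    (f : X → Y) : TopologicalSpace X :=
  τ ⊓ TopologicalSpace.induced f tY

/-!
On the fiber `F = f⁻¹(y)` the topologies `σ(τ,f)` and `τ` coincide, so it suffices to show that
the boundary `B` of `F` is `τ`-sequentially compact, i.e. that every sequence `xₙ` in `B` has a
`σ`-cluster point. As `xₙ` lies in the `σ`-closure of `X \ F`, there are `zₙ ∉ F` with
`d(zₙ, xₙ) < 1/(n+1)`, `f zₙ ∈ Uₙ` (the q-point neighbourhoods of `y`) and pairwise distinct values
`f zₙ`. Since `σ` is coarser than the topology of `X`, `f` is still closed for `σ`, and then the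
q-point property forces `zₙ` to have a `σ`-cluster point `r`, which is a `τ`-cluster point of
`xₙ`. If `f r = y`, the subsequence of `xₙ` converging to `r` in `τ` also converges in `σ`.
Otherwise we rerun the construction along that subsequence with `f zₙ` confined to a neighbourhood
of `y` whose closure misses `f r`, which contradicts `f r` being a cluster point of `f zₙ`.
-/

open Filter Topology Set Function

theorem FunctionallyHausdorff.t2Space {Y : Type*} [TopologicalSpace Y]
    (hY : FunctionallyHausdorff Y) : T2Space Y where
  t2 a b hab := by
    obtain ⟨g, hg, -, hga, hgb⟩ := hY a b hab
    exact separated_by_continuous hg (by rw [hga, hgb]; exact zero_ne_one)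

theorem exists_injective_forall_mem {α : Type*} {A : ℕ → Set α} (hA : ∀ n, (A n).Infinite) :
    ∃ w : ℕ → α, Injective w ∧ ∀ n, w n ∈ A n := by
  classical
  choose next hnext using fun n (s : Finset α) => (hA n).exists_notMem_finset s
  let pre : ℕ → Finset α := fun n => Nat.rec ∅ (fun k s => insert (next k s) s) n
  have hpre : ∀ {m n}, m < n → next m (pre m) ∈ pre n := by
    intro m n hmn
    induction hmn with
    | refl => exact Finset.mem_insert_self _ _
    | step _ ih => exact Finset.mem_insert_of_mem ih
  refine ⟨fun n => next n (pre n), fun m n (hmn : next m (pre m) = next n (pre n)) => ?_,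
    fun n => (hnext n _).1⟩
  by_contra hne
  rcases lt_or_gt_of_ne hne with hlt | hlt
  · exact (hnext n (pre n)).2 (hmn ▸ hpre hlt)
  · exact (hnext m (pre m)).2 (hmn.symm ▸ hpre hlt)

section ClusterPoints

variable {X Y : Type*} [TopologicalSpace X]

theorem locallyFinite_singleton_of_forall_not_mapClusterPt_s7 {z : ℕ → X}
    (hz : ∀ r, ¬MapClusterPt r atTop z) : LocallyFinite fun k => ({z k} : Set X) := by
  intro r
  obtain ⟨s, hs, hfreq⟩ := not_forall₂.1 (mt mapClusterPt_iff_frequently.2 (hz r))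
  refine ⟨s, hs, ?_⟩
  simpa [← Nat.cofinite_eq_atTop, Filter.Frequently, Filter.eventually_cofinite] using hfreq

theorem isClosed_image_of_forall_not_mapClusterPt [T1Space X] {z : ℕ → X}
    (hz : ∀ r, ¬MapClusterPt r atTop z) (S : Set ℕ) : IsClosed (z '' S) := by
  rw [image_eq_iUnion, biUnion_eq_iUnion]
  exact ((locallyFinite_singleton_of_forall_not_mapClusterPt_s7 hz).comp_injective
    Subtype.val_injective).isClosed_iUnion fun _ => isClosed_singleton

theorem IsQPoint.exists_forall_exists_mapClusterPt [T1Space X] [TopologicalSpace Y] {f : X → Y}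
    (hf : IsClosedMap f) {y : Y} (hy : IsQPoint y) :
    ∃ U : ℕ → Set Y, (∀ i, IsOpen (U i) ∧ y ∈ U i) ∧ ∀ z : ℕ → X, (∀ k, f (z k) ∈ U k) →
      Injective (f ∘ z) → ∃ r, MapClusterPt r atTop z := by
  obtain ⟨U, hU, hUacc⟩ := hy
  refine ⟨U, hU, fun z hzU hinj => ?_⟩
  by_contra! hz
  obtain ⟨p, hp⟩ := hUacc (f ∘ z) hzU hinj
  have hclosed : IsClosed ((f ∘ z) '' {k | f (z k) ≠ p}) := by
    rw [image_comp]
    exact hf _ (isClosed_image_of_forall_not_mapClusterPt hz _)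
  have hsub : range (f ∘ z) \ {p} ⊆ (f ∘ z) '' {k | f (z k) ≠ p} := by
    rintro _ ⟨⟨k, rfl⟩, hk⟩
    exact ⟨k, hk, rfl⟩
  obtain ⟨k, hk, hkp⟩ := closure_minimal hsub hclosed hp
  exact hk hkp

theorem infinite_image_inter_compl_fiber [TopologicalSpace Y] [T1Space Y] {f : X → Y}
    (hf : Continuous f) {x : X} (hx : x ∈ closure (f ⁻¹' {f x})ᶜ) {O : Set X} (hO : O ∈ 𝓝 x) :
    (f '' (O ∩ (f ⁻¹' {f x})ᶜ)).Infinite := by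
  intro hfin
  have hxA : f x ∉ f '' (O ∩ (f ⁻¹' {f x})ᶜ) := by
    rintro ⟨v, ⟨-, hv⟩, hvx⟩
    exact hv hvx
  have hN : O ∩ f ⁻¹' (f '' (O ∩ (f ⁻¹' {f x})ᶜ))ᶜ ∈ 𝓝 x :=
    inter_mem hO (hf.continuousAt.preimage_mem_nhds (hfin.isClosed.isOpen_compl.mem_nhds hxA))
  obtain ⟨v, ⟨hvO, hvA⟩, hvF⟩ := mem_closure_iff_nhds.1 hx _ hN
  exact hvA ⟨v, ⟨hvO, hvF⟩, rfl⟩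

end ClusterPoints

theorem MapClusterPt.of_tendsto_dist {X : Type*} [PseudoMetricSpace X] {z x : ℕ → X} {r : X}
    (hr : MapClusterPt r atTop z) (h : Tendsto (fun n => dist (z n) (x n)) atTop (𝓝 0)) :
    MapClusterPt r atTop x := by
  obtain ⟨ψ, hψ, hzψ⟩ := hr.tendsto_subseq
  exact (hzψ.congr_dist (h.comp hψ.tendsto_atTop)).mapClusterPt.of_comp hψ.tendsto_atTop

section SigmaTop

variable {X Y : Type*} [τ : TopologicalSpace X] [tY : TopologicalSpace Y] {f : X → Y}

theorem continuous_sigmaTop : Continuous[sigmaTop τ tY f, tY] f :=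
  continuous_iff_le_induced.2 inf_le_right

theorem t1Space_sigmaTop [T1Space X] : @T1Space X (sigmaTop τ tY f) :=
  t1Space_antitone inf_le_left inferInstance

theorem tendsto_nhds_sigmaTop_iff {ι : Type*} {l : Filter ι} {u : ι → X} {x : X} :
    Tendsto u l (@nhds X (sigmaTop τ tY f) x) ↔
      Tendsto u l (𝓝 x) ∧ Tendsto (f ∘ u) l (𝓝 (f x)) := by
  rw [sigmaTop, nhds_inf, nhds_induced, tendsto_inf, tendsto_comap_iff]

theorem MapClusterPt.of_sigmaTop {ι : Type*} {l : Filter ι} {u : ι → X} {x : X}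
    (h : @MapClusterPt X (sigmaTop τ tY f) ι x l u) : MapClusterPt x l u :=
  NeBot.mono h (inf_le_inf_right _ (nhds_mono inf_le_left))

theorem MapClusterPt.map_of_sigmaTop {ι : Type*} {l : Filter ι} {u : ι → X} {x : X}
    (h : @MapClusterPt X (sigmaTop τ tY f) ι x l u) : MapClusterPt (f x) l (f ∘ u) :=
  @MapClusterPt.continuousAt_comp X (sigmaTop τ tY f) Y ι l u x tY f
    (@Continuous.continuousAt X Y (sigmaTop τ tY f) tY f x continuous_sigmaTop) h

theorem isCompact_sigmaTop {s : Set X} (hs : IsCompact s) (hf : ContinuousOn f s) :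
    @IsCompact X (sigmaTop τ tY f) s := by
  have : CompactSpace s := isCompact_iff_compactSpace.1 hs
  have hval : Continuous[_, sigmaTop τ tY f] ((↑) : s → X) :=
    continuous_inf_rng.2 ⟨continuous_subtype_val,
      continuous_induced_rng.2 (continuousOn_iff_continuous_domRestrict.1 hf)⟩
  simpa using @isCompact_range s X _ (sigmaTop τ tY f) _ _ hval

end SigmaTop

section Metric

variable {X Y : Type*} [MetricSpace X] [tY : TopologicalSpace Y] {f : X → Y} {y : Y}

local notation "σ" => sigmaTop inferInstance tY f

theorem exists_mapClusterPt_map_mem_closure [T1Space Y] (hy : IsQPoint y)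
    (hcl : @IsClosedMap X Y σ tY f) {x : ℕ → X} (hxf : ∀ n, f (x n) = y)
    (hx : ∀ n, x n ∈ closure[σ] (f ⁻¹' {y})ᶜ) {V : Set Y} (hV : IsOpen V) (hyV : y ∈ V) :
    ∃ r, MapClusterPt r atTop x ∧ f r ∈ closure V := by
  obtain ⟨U, hU, hUz⟩ :=
    @IsQPoint.exists_forall_exists_mapClusterPt X Y σ t1Space_sigmaTop tY f hcl y hy
  set O : ℕ → Set X := fun n => Metric.ball (x n) (1 / (n + 1)) ∩ f ⁻¹' (U n ∩ V)
  have hO : ∀ n, O n ∈ @nhds X σ (x n) := fun n =>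
    @IsOpen.mem_nhds X σ _ _
      (@IsOpen.inter X σ _ _ (Metric.isOpen_ball.mono inf_le_left)
        (@IsOpen.preimage X Y σ tY f continuous_sigmaTop _ ((hU n).1.inter hV)))
      ⟨Metric.mem_ball_self (by positivity), by simp [hxf, (hU n).2, hyV]⟩
  have hA : ∀ n, (f '' (O n ∩ (f ⁻¹' {y})ᶜ)).Infinite := fun n => by
    simpa [hxf] using @infinite_image_inter_compl_fiber X Y σ tY _ f continuous_sigmaTop (x n)
      (by simpa [hxf] using hx n) (O n) (hO n)
  obtain ⟨w, hw, hwA⟩ := exists_injective_forall_mem hA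
  choose z hz hzw using hwA
  have hfz : f ∘ z = w := funext hzw
  obtain ⟨r, hr⟩ := hUz z (fun n => (hz n).1.2.1) (hfz ▸ hw)
  refine ⟨r, hr.of_sigmaTop.of_tendsto_dist ?_, ?_⟩
  · refine squeeze_zero (fun _ => dist_nonneg) (fun n => (hz n).1.1.le)
      tendsto_one_div_add_atTop_nhds_zero_nat
  · exact isClosed_closure.mem_of_mapClusterPt hr.map_of_sigmaTop
      (Eventually.of_forall fun n => subset_closure (hz n).1.2.2)

theorem exists_mapClusterPt_sigmaTop [T2Space Y] (hy : IsQPoint y)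
    (hcl : @IsClosedMap X Y σ tY f) {x : ℕ → X} (hxf : ∀ n, f (x n) = y)
    (hx : ∀ n, x n ∈ closure[σ] (f ⁻¹' {y})ᶜ) : ∃ q, @MapClusterPt X σ ℕ q atTop x := by
  obtain ⟨r, hr, -⟩ := exists_mapClusterPt_map_mem_closure hy hcl hxf hx isOpen_univ (mem_univ y)
  obtain ⟨φ, hφ, hxφ⟩ := hr.tendsto_subseq
  by_cases hry : f r = y
  · have hfxφ : Tendsto (f ∘ x ∘ φ) atTop (𝓝 (f r)) := by
      simp [comp_def, hxf, hry]
    exact ⟨r, @MapClusterPt.of_comp X σ _ _ _ _ _ _ _ hφ.tendsto_atTop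
      (@Tendsto.mapClusterPt X σ _ _ _ _ _ (tendsto_nhds_sigmaTop_iff.2 ⟨hxφ, hfxφ⟩))⟩
  · obtain ⟨V, W, hV, hW, hyV, hrW, hVW⟩ := t2_separation (Ne.symm hry)
    obtain ⟨r', hr', hr'V⟩ := exists_mapClusterPt_map_mem_closure hy hcl
      (fun n => hxf (φ n)) (fun n => hx (φ n)) hV hyV
    obtain rfl : r' = r := eq_of_nhds_neBot (hr'.neBot.mono (inf_le_inf_left _ hxφ))
    exact absurd hrW ((hVW.closure_left hW).notMem_of_mem_left hr'V)

theorem isCompact_frontier_fiber_sigmaTop [T2Space Y] (hy : IsQPoint y)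
    (hcl : @IsClosedMap X Y σ tY f) : @IsCompact X σ (@frontier X σ (f ⁻¹' {y})) := by
  set B := @frontier X σ (f ⁻¹' {y})
  have hBF : B ⊆ f ⁻¹' {y} := by
    have hF : IsClosed[σ] (f ⁻¹' {y}) :=
      @IsClosed.preimage X Y σ tY f continuous_sigmaTop _ isClosed_singleton
    exact (@frontier_subset_closure X σ _).trans (@IsClosed.closure_subset X σ _ hF)
  have hBcl : B ⊆ closure[σ] (f ⁻¹' {y})ᶜ := fun b hb =>
    ((@frontier_eq_closure_inter_closure X σ _).subset hb).2
  have hseq : IsSeqCompact B := fun x hx => by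
    obtain ⟨q, hq⟩ :=
      exists_mapClusterPt_sigmaTop hy hcl (fun n => hBF (hx n)) (fun n => hBcl (hx n))
    obtain ⟨ψ, hψ, hlim⟩ := hq.of_sigmaTop.tendsto_subseq
    exact ⟨q, @IsClosed.mem_of_mapClusterPt X σ _ _ _ _ _ (@isClosed_frontier X σ _) hq
      (Eventually.of_forall hx), ψ, hψ, hlim⟩
  exact isCompact_sigmaTop hseq.isCompact (continuousOn_const.congr fun b hb => hBF hb)

end Metric

theorem frontier_fiber_isCompact_general {X : Type u} {Y : Type v}
    [tX : TopologicalSpace X] [tY : TopologicalSpace Y]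
    (hY : FunctionallyHausdorff Y)
    (f : X → Y) (hf : Continuous f)
    (hclosed : IsClosedMap f) (y : Y) (hy : IsQPoint y) :
    ∀ τ : TopologicalSpace X, tX ≤ τ → @TopologicalSpace.MetrizableSpace X τ →
      @IsCompact X (sigmaTop τ tY f) (@frontier X (sigmaTop τ tY f) (f ⁻¹' {y})) := by
  intro τ hτ hτm
  obtain ⟨m, rfl⟩ : ∃ m : MetricSpace X, m.toUniformSpace.toTopologicalSpace = τ :=
    ⟨@TopologicalSpace.metrizableSpaceMetric X τ hτm, rfl⟩
  have : T2Space Y := hY.t2Space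
  have htσ : tX ≤ sigmaTop m.toUniformSpace.toTopologicalSpace tY f :=
    le_inf hτ (continuous_iff_le_induced.1 hf)
  exact @isCompact_frontier_fiber_sigmaTop X Y m tY f y _ hy fun s hs => hclosed s (hs.mono htσ)

/-- Let `f : X → Y` be a closed continuous surjection, `X` submetrizable, `Y` functionally
Hausdorff and `y` a q-point. Then for every coarser metrizable topology `τ` on `X`, the
`σ(τ,f)`-boundary of the fiber `f⁻¹(y)` is compact in `(X, σ(τ,f))`. -/
theorem frontier_fiber_isCompact {X : Type u} {Y : Type v}
    [tX : TopologicalSpace X] [tY : TopologicalSpace Y] [T1Space X] [T1Space Y]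
    (hX : Submetrizable X) (hY : FunctionallyHausdorff Y)
    (f : X → Y) (hf : Continuous f) (hsurj : Function.Surjective f)
    (hclosed : IsClosedMap f) (y : Y) (hy : IsQPoint y) :
    ∀ τ : TopologicalSpace X, tX ≤ τ → @TopologicalSpace.MetrizableSpace X τ →
      @IsCompact X (sigmaTop τ tY f) (@frontier X (sigmaTop τ tY f) (f ⁻¹' {y})) :=
  frontier_fiber_isCompact_general (tX := tX) (tY := tY) hY f hf hclosed y hy
end

section
/- Let X be submetrizable, Y functionally Hausdorff and dense-in-itself, and f : X → Y an open-closed continuous surjection. If every point of Y is the limit of a nontrivial convergent sequence in Y, then Y is submetrizable. -/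
universe u v

/-!
Pull the metric topology back along a continuous injection `e : X → Z` into a metric space and
send `y : Y` to `e '' f⁻¹{y}`. These sets are compact: a sequence in one of them is shadowed,
through openness of `f`, by points over a nontrivial sequence converging to `y`, and closedness of
`f` yields a cluster point of the shadows in the fibre. Openness and closedness of `f` make
`y ↦ e '' f⁻¹{y}` lower and upper semicontinuous, hence continuous for the Hausdorff metric on
nonempty compacts, and it is injective since the fibres are disjoint and nonempty; the topology it
induces on `Y` is the required coarser metrizable one.
-/

open Filter Topology Set Metric Function TopologicalSpace

theorem Submetrizable.exists_continuous_injective {X : Type u} [TopologicalSpace X]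
    (h : Submetrizable X) :
    ∃ (Z : Type u) (_ : MetricSpace Z) (e : X → Z), Continuous e ∧ Injective e := by
  obtain ⟨σ, hle, hσ⟩ := h
  exact ⟨X, @TopologicalSpace.metrizableSpaceMetric X σ hσ, id, continuous_id_of_le hle,
    injective_id⟩

theorem submetrizable_of_continuous_injective {Y : Type v} {Z : Type*} [TopologicalSpace Y]
    [TopologicalSpace Z] [MetrizableSpace Z] {g : Y → Z} (hg : Continuous g)
    (hinj : Injective g) : Submetrizable Y :=
  ⟨.induced g ‹_›, continuous_iff_le_induced.mp hg,
    @IsEmbedding.metrizableSpace Y Z (.induced g ‹_›) _ _ g hinj.isEmbedding_induced⟩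

theorem Metric.hausdorffDist_le_of_subset_thickening {Z : Type*} [PseudoMetricSpace Z]
    {s t : Set Z} {δ : ℝ} (hδ : 0 ≤ δ) (hst : s ⊆ thickening δ t)
    (hts : t ⊆ thickening δ s) :
    hausdorffDist s t ≤ δ := by
  refine hausdorffDist_le_of_mem_dist hδ (fun x hx => ?_) (fun x hx => ?_)
  · obtain ⟨y, hy, hxy⟩ := mem_thickening_iff.mp (hst hx)
    exact ⟨y, hy, hxy.le⟩
  · obtain ⟨y, hy, hxy⟩ := mem_thickening_iff.mp (hts hx)
    exact ⟨y, hy, hxy.le⟩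

theorem mapClusterPt_of_mem_closure_range {Z : Type*} [TopologicalSpace Z] [T1Space Z]
    {u : ℕ → Z} {z : Z} (hz : z ∈ closure (range u)) (hne : ∀ n, u n ≠ z) :
    MapClusterPt z atTop u := by
  refine mapClusterPt_atTop_iff_forall_mem_closure.mpr fun m => ?_
  have hsplit : range u = u '' Iio m ∪ u '' Ici m := by
    rw [← image_union, Iio_union_Ici, image_univ]
  rw [hsplit, closure_union, ((finite_Iio m).image u).isClosed.closure_eq] at hz
  exact hz.resolve_left fun ⟨n, _, hn⟩ => hne n hn

section FiberImages

variable {X Y Z : Type*} [MetricSpace Z] {e : X → Z} {f : X → Y}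

variable (e f) in
def fiberCompacts (hsurj : Surjective f) (hK : ∀ y, IsCompact (e '' (f ⁻¹' {y}))) (y : Y) :
    NonemptyCompacts Z :=
  ⟨⟨e '' (f ⁻¹' {y}), hK y⟩, let ⟨x, hx⟩ := hsurj y; ⟨e x, x, hx, rfl⟩⟩

theorem fiberCompacts_injective (hinj : Injective e) (hsurj : Surjective f)
    (hK : ∀ y, IsCompact (e '' (f ⁻¹' {y}))) : Injective (fiberCompacts e f hsurj hK) := by
  intro y₁ y₂ h
  obtain ⟨x, rfl⟩ := hsurj y₁
  have hfib : e '' (f ⁻¹' {f x}) = e '' (f ⁻¹' {y₂}) :=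
    congrArg ((↑) : NonemptyCompacts Z → Set Z) h
  obtain ⟨x', hx', hxx'⟩ := hfib ▸ mem_image_of_mem e (mem_singleton (f x))
  rw [← hinj hxx', ← mem_singleton_iff.mp hx']

variable [TopologicalSpace X] [TopologicalSpace Y]

theorem IsOpenMap.eventually_mem_thickening_image_fiber (he : Continuous e) (hf : IsOpenMap f)
    (x : X) {δ : ℝ} (hδ : 0 < δ) :
    ∀ᶠ y' in 𝓝 (f x), e x ∈ thickening δ (e '' (f ⁻¹' {y'})) := by
  have hball : e ⁻¹' ball (e x) δ ∈ 𝓝 x :=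
    (isOpen_ball.preimage he).mem_nhds (mem_ball_self hδ)
  filter_upwards [hf.image_mem_nhds hball]
  rintro _ ⟨x', hx', rfl⟩
  exact mem_thickening_iff.mpr ⟨e x', mem_image_of_mem e rfl, by rwa [dist_comm]⟩

theorem IsOpenMap.eventually_image_fiber_subset_thickening (he : Continuous e) (hf : IsOpenMap f)
    {y : Y} (hK : IsCompact (e '' (f ⁻¹' {y}))) {δ : ℝ} (hδ : 0 < δ) :
    ∀ᶠ y' in 𝓝 y, e '' (f ⁻¹' {y}) ⊆ thickening δ (e '' (f ⁻¹' {y'})) := by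
  obtain ⟨T, hTK, hT, hKT⟩ := hK.finite_cover_balls (half_pos hδ)
  have hT_near : ∀ᶠ y' in 𝓝 y, T ⊆ thickening (δ / 2) (e '' (f ⁻¹' {y'})) := by
    refine (eventually_all_finite hT).mpr fun c hc => ?_
    obtain ⟨x, hx, rfl⟩ := hTK hc
    rw [← mem_singleton_iff.mp hx]
    exact hf.eventually_mem_thickening_image_fiber he x (half_pos hδ)
  filter_upwards [hT_near] with y' hy'
  calc e '' (f ⁻¹' {y}) ⊆ thickening (δ / 2) T := by rwa [thickening_eq_biUnion_ball]
    _ ⊆ thickening (δ / 2) (thickening (δ / 2) (e '' (f ⁻¹' {y'}))) :=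
      thickening_subset_of_subset _ hy'
    _ ⊆ thickening δ (e '' (f ⁻¹' {y'})) := by
      simpa only [add_halves] using thickening_thickening_subset (δ / 2) (δ / 2) _

theorem IsClosedMap.eventually_image_fiber_subset_thickening (he : Continuous e)
    (hf : IsClosedMap f) (y : Y) {δ : ℝ} (hδ : 0 < δ) :
    ∀ᶠ y' in 𝓝 y, e '' (f ⁻¹' {y'}) ⊆ thickening δ (e '' (f ⁻¹' {y})) := by
  set U := e ⁻¹' thickening δ (e '' (f ⁻¹' {y}))
  have hfU : y ∉ f '' Uᶜ := fun ⟨x, hxU, hxy⟩ =>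
    hxU (self_subset_thickening hδ _ (mem_image_of_mem e hxy))
  have hV : (f '' Uᶜ)ᶜ ∈ 𝓝 y :=
    (hf _ (isOpen_thickening.preimage he).isClosed_compl).isOpen_compl.mem_nhds hfU
  filter_upwards [hV] with y' hy'
  rintro _ ⟨x, hx, rfl⟩
  by_contra hxU
  exact hy' ⟨x, hxU, hx⟩

theorem isCompact_image_fiber (he : Continuous e) (hinj : Injective e) (hopen : IsOpenMap f)
    (hclosed : IsClosedMap f) {y : Y} {x : ℕ → Y} (hx : Tendsto x atTop (𝓝 y))
    (hne : ∃ᶠ n in atTop, x n ≠ y) : IsCompact (e '' (f ⁻¹' {y})) := by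
  refine IsSeqCompact.isCompact fun v hv => ?_
  have hsel : ∀ k : ℕ,
      ∃ a n, k ≤ n ∧ x n ≠ y ∧ f a = x n ∧ dist (e a) (v k) < 1 / (k + 1) := by
    intro k
    obtain ⟨u, hu, huv⟩ := hv k
    have hW : e ⁻¹' ball (v k) (1 / (k + 1)) ∈ 𝓝 u :=
      (isOpen_ball.preimage he).mem_nhds
        (by rw [mem_preimage, huv]; exact mem_ball_self (by positivity))
    rw [← mem_singleton_iff.mp hu] at hx
    obtain ⟨n, hkn, ⟨a, ha, hfa⟩, hxn⟩ :=
      frequently_atTop.mp ((hx.eventually (hopen.image_mem_nhds hW)).and_frequently hne) k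
    exact ⟨a, n, hkn, hxn, hfa, ha⟩
  choose a ν hkν hxν hfa hdist using hsel
  have hfa_lim : Tendsto (f ∘ a) atTop (𝓝 y) := by
    simpa only [comp_def, hfa] using hx.comp (tendsto_atTop_mono hkν tendsto_id)
  obtain ⟨q, hq, hqy⟩ : y ∈ f '' closure (range a) :=
    hclosed.closure_image_subset _ <|
      mem_closure_of_tendsto hfa_lim
        (Eventually.of_forall fun n => mem_image_of_mem f (mem_range_self n))
  have hcluster : MapClusterPt (e q) atTop (e ∘ a) := by
    refine mapClusterPt_of_mem_closure_range ?_ fun n hn => hxν n ?_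
    · rw [range_comp]
      exact image_closure_subset_closure_image he (mem_image_of_mem e hq)
    · rw [← hfa, hinj hn, hqy]
  obtain ⟨ψ, hψ, hlim⟩ := hcluster.tendsto_subseq
  refine ⟨e q, mem_image_of_mem e hqy, ψ, hψ, hlim.congr_dist ?_⟩
  exact squeeze_zero (fun _ => dist_nonneg) (fun k => (hdist (ψ k)).le)
    (tendsto_one_div_add_atTop_nhds_zero_nat.comp hψ.tendsto_atTop)

theorem continuous_fiberCompacts (he : Continuous e) (hopen : IsOpenMap f)
    (hclosed : IsClosedMap f) (hsurj : Surjective f) (hK : ∀ y, IsCompact (e '' (f ⁻¹' {y}))) :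
    Continuous (fiberCompacts e f hsurj hK) := by
  refine continuous_iff_continuousAt.mpr fun y => Metric.tendsto_nhds.mpr fun ε hε => ?_
  filter_upwards [hclosed.eventually_image_fiber_subset_thickening he y (half_pos hε),
    hopen.eventually_image_fiber_subset_thickening he (hK y) (half_pos hε)] with y' h₁ h₂
  rw [NonemptyCompacts.dist_eq]
  exact (hausdorffDist_le_of_subset_thickening (half_pos hε).le h₁ h₂).trans_lt
    (half_lt_self hε)

end FiberImages

theorem submetrizable_of_openClosed_image_sequences_general {X : Type u} {Y : Type v}
    [TopologicalSpace X] [TopologicalSpace Y]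
    (hX : Submetrizable X)
    (hseq : ∀ y : Y, ∃ x : ℕ → Y, Filter.Tendsto x Filter.atTop (nhds y) ∧
      ¬ ∃ a : Y, ∀ᶠ n in Filter.atTop, x n = a)
    (f : X → Y) (hsurj : Function.Surjective f)
    (hopen : IsOpenMap f) (hclosed : IsClosedMap f) :
    Submetrizable Y := by
  obtain ⟨Z, _, e, he, hinj⟩ := hX.exists_continuous_injective
  have hK : ∀ y, IsCompact (e '' (f ⁻¹' {y})) := fun y => by
    obtain ⟨x, hx, hnc⟩ := hseq y
    exact isCompact_image_fiber he hinj hopen hclosed hx (not_eventually.mp fun h => hnc ⟨y, h⟩)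
  exact submetrizable_of_continuous_injective
    (continuous_fiberCompacts he hopen hclosed hsurj hK) (fiberCompacts_injective hinj hsurj hK)

/-- If `X` is submetrizable, `Y` is functionally Hausdorff, dense-in-itself, every point of `Y`
is the limit of a nontrivial (not eventually constant) convergent sequence, and `f : X → Y` is
an open-closed continuous surjection, then `Y` is submetrizable. -/
theorem submetrizable_of_openClosed_image_sequences {X : Type u} {Y : Type v}
    [TopologicalSpace X] [TopologicalSpace Y] [T1Space X] [T1Space Y]
    (hX : Submetrizable X) (hY : FunctionallyHausdorff Y)
    (hdense : ∀ y : Y, (nhdsWithin y {y}ᶜ).NeBot)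
    (hseq : ∀ y : Y, ∃ x : ℕ → Y, Filter.Tendsto x Filter.atTop (nhds y) ∧
      ¬ ∃ a : Y, ∀ᶠ n in Filter.atTop, x n = a)
    (f : X → Y) (hf : Continuous f) (hsurj : Function.Surjective f)
    (hopen : IsOpenMap f) (hclosed : IsClosedMap f) :
    Submetrizable Y :=
  submetrizable_of_openClosed_image_sequences_general hX hseq f hsurj hopen hclosed
end
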